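/- Let V_1, ..., V_4 each be 2-dimensional vector spaces over an algebraically closed field of characteristic 0. Then for any three nonzero simple tensors p_1, p_2, p_3 in V_1 ⊗ V_2 ⊗ V_3 ⊗ V_4, the sum of the three affine tangent spaces to the Segre cone at p_1, p_2, p_3 satisfies dim(T_{p_1} + T_{p_2} + T_{p_3}) ≤ 14. -/

import Mathlib

open scoped TensorProduct
open Module

/-- The affine tangent space to the Segre cone at the simple tensor `⨂ₜ i, v i`. -/
noncomputable def segreTangent (K : Type*) [Field K] {ι : Type*} [DecidableEq ι]
    (V : ι → Type*) [∀ i, AddCommGroup (V i)] [∀ i, Module K (V i)] (v : ∀ i, V i) :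
    Submodule K (⨂[K] i, V i) :=
  Submodule.span K
    {t | ∃ (i : ι) (w : V i), t = PiTensorProduct.tprod K (Function.update v i w)}


open scoped TensorProduct
open Module

section Slot
variable {K : Type*} [Field K] {V : Fin 4 → Type*} [∀ i, AddCommGroup (V i)]
  [∀ i, Module K (V i)] (e : ∀ i, Basis (Fin 2) K (V i))

/-- slot-wise 2×2 determinant. -/
noncomputable def dd (i : Fin 4) (u v : V i) : K :=
  (e i).repr u 0 * (e i).repr v 1 - (e i).repr u 1 * (e i).repr v 0

lemma dd_self (i : Fin 4) (u : V i) : dd e i u u = 0 := by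
  simp [dd]; ring

lemma dd_smul_left (i : Fin 4) (c : K) (u v : V i) :
    dd e i (c • u) v = c * dd e i u v := by
  simp [dd]; ring

lemma dd_comm_zero {i : Fin 4} {u v : V i} (h : dd e i u v = 0) : dd e i v u = 0 := by
  simp only [dd] at h ⊢; linear_combination -h

lemma ne_zero_coord {i : Fin 4} {u : V i} (hu : u ≠ 0) :
    (e i).repr u 0 ≠ 0 ∨ (e i).repr u 1 ≠ 0 := by
  by_contra h
  push_neg at h
  exact hu ((e i).ext_elem fun k => by fin_cases k <;> simp [h.1, h.2])

lemma cramer_coord (i : Fin 4) (u v w : V i) (k : Fin 2) :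
    dd e i v w * (e i).repr u k
      = dd e i u w * (e i).repr v k - dd e i u v * (e i).repr w k := by
  fin_cases k <;> (simp [dd]; ring)

/-- Cramer: `dd(v,w) • u = dd(u,w) • v - dd(u,v) • w`. -/
lemma cramer_vec (i : Fin 4) (u v w : V i) :
    dd e i v w • u = dd e i u w • v - dd e i u v • w := by
  refine (e i).ext_elem fun k => ?_
  simp [map_smul, map_sub, cramer_coord e i u v w k]

lemma exists_smul {i : Fin 4} {u v : V i} (hu : u ≠ 0) (h : dd e i u v = 0) :
    ∃ c : K, v = c • u := by
  simp only [dd, sub_eq_zero] at h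
  rcases ne_zero_coord e hu with h0 | h0
  · refine ⟨(e i).repr v 0 / (e i).repr u 0, (e i).ext_elem fun k => ?_⟩
    fin_cases k <;> simp [map_smul] <;> field_simp <;> linear_combination h
  · refine ⟨(e i).repr v 1 / (e i).repr u 1, (e i).ext_elem fun k => ?_⟩
    fin_cases k <;> simp [map_smul] <;> field_simp <;> linear_combination -h

include e in
lemma exists_dual {i : Fin 4} {u : V i} (hu : u ≠ 0) :
    ∃ ε : V i →ₗ[K] K, ε u = 1 := by
  rcases ne_zero_coord e hu with h0 | h0
  · exact ⟨((e i).repr u 0)⁻¹ • (e i).coord 0, by simp [Basis.coord_apply]; field_simp⟩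
  · exact ⟨((e i).repr u 1)⁻¹ • (e i).coord 1, by simp [Basis.coord_apply]; field_simp⟩

include e in
lemma exists_compl {i : Fin 4} {u : V i} (hu : u ≠ 0) :
    ∃ w : V i, ∀ z : V i, ∃ c d : K, z = c • u + d • w := by
  rcases ne_zero_coord e hu with h0 | h0
  · refine ⟨e i 1, fun z => ⟨(e i).repr z 0 / (e i).repr u 0,
      (e i).repr z 1 - (e i).repr u 1 * (e i).repr z 0 / (e i).repr u 0, ?_⟩⟩
    refine (e i).ext_elem fun k => ?_
    fin_cases k <;> simp [map_smul, Basis.repr_self, Finsupp.single_apply] <;> field_simp <;> ring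
  · refine ⟨e i 0, fun z => ⟨(e i).repr z 1 / (e i).repr u 1,
      (e i).repr z 0 - (e i).repr u 0 * (e i).repr z 1 / (e i).repr u 1, ?_⟩⟩
    refine (e i).ext_elem fun k => ?_
    fin_cases k <;> simp [map_smul, Basis.repr_self, Finsupp.single_apply] <;> field_simp <;> ring

/-- the linear functional `dd e i u ·`. -/
noncomputable def ddL (i : Fin 4) (u : V i) : V i →ₗ[K] K :=
  (e i).repr u 0 • (e i).coord 1 - (e i).repr u 1 • (e i).coord 0

lemma ddL_apply (i : Fin 4) (u v : V i) : ddL e i u v = dd e i u v := by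
  simp [ddL, dd, Basis.coord_apply]

end Slot
section Tensor
variable {K : Type*} [Field K] {V : Fin 4 → Type*} [∀ i, AddCommGroup (V i)]
  [∀ i, Module K (V i)] (e : ∀ i, Basis (Fin 2) K (V i))

open PiTensorProduct

/-- basis tensors -/
noncomputable def Ee (r : Fin 4 → Fin 2) : ⨂[K] i, V i :=
  tprod K fun i => e i (r i)

/-- coefficient of a pure tensor on a basis tensor -/
noncomputable def coef (u : ∀ i, V i) (r : Fin 4 → Fin 2) : K :=
  ∏ i, (e i).repr (u i) (r i)

lemma tprod_eq_sum (u : ∀ i, V i) :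
    (tprod K u : ⨂[K] i, V i) = ∑ r : Fin 4 → Fin 2, coef e u r • Ee e r := by
  have hu : u = fun i => ∑ k : Fin 2, (e i).repr (u i) k • e i k :=
    funext fun i => ((e i).sum_repr (u i)).symm
  calc (tprod K u : ⨂[K] i, V i)
      = tprod K fun i => ∑ k : Fin 2, (e i).repr (u i) k • e i k := by rw [← hu]
    _ = ∑ r : Fin 4 → Fin 2, tprod K fun i => (e i).repr (u i) (r i) • e i (r i) :=
        MultilinearMap.map_sum _ _
    _ = ∑ r : Fin 4 → Fin 2, coef e u r • Ee e r :=
        Finset.sum_congr rfl fun r _ => MultilinearMap.map_smul_univ _ _ _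

lemma smul_tprod_eq_sum (c : K) (u : ∀ i, V i) :
    c • (tprod K u : ⨂[K] i, V i) = ∑ r : Fin 4 → Fin 2, (c * coef e u r) • Ee e r := by
  rw [tprod_eq_sum e u, Finset.smul_sum]
  exact Finset.sum_congr rfl fun r _ => (smul_smul _ _ _)

lemma sum_smul_tprod_eq_sum (c : Fin 4 → K) (w : Fin 4 → ∀ i, V i) :
    (∑ i, c i • (tprod K (w i) : ⨂[K] i, V i))
      = ∑ r : Fin 4 → Fin 2, (∑ i, c i * coef e (w i) r) • Ee e r := by
  rw [Finset.sum_congr rfl fun i (_ : i ∈ Finset.univ) => smul_tprod_eq_sum e (c i) (w i),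
    Finset.sum_comm]
  exact Finset.sum_congr rfl fun r _ => (Finset.sum_smul).symm

/-- product functional -/
noncomputable def flin (ε : ∀ i, V i →ₗ[K] K) : (⨂[K] i, V i) →ₗ[K] K :=
  PiTensorProduct.lift ((MultilinearMap.mkPiAlgebra K (Fin 4) K).compLinearMap ε)

lemma flin_tprod (ε : ∀ i, V i →ₗ[K] K) (v : ∀ i, V i) :
    flin ε (tprod K v) = ∏ i, ε i (v i) := by
  simp [flin, MultilinearMap.mkPiAlgebra_apply]

include e in
lemma tprod_ne_zero {v : ∀ i, V i} (hv : ∀ i, v i ≠ 0) :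
    (tprod K v : ⨂[K] i, V i) ≠ 0 := by
  choose ε hε using fun i => exists_dual e (hv i)
  intro h0
  have := flin_tprod ε v
  rw [h0, map_zero] at this
  simp [hε] at this

lemma mem_tangent (v : ∀ i, V i) (i : Fin 4) (w : V i) :
    (tprod K (Function.update v i w) : ⨂[K] i, V i) ∈ segreTangent K V v :=
  Submodule.subset_span ⟨i, w, rfl⟩

lemma self_mem_tangent (v : ∀ i, V i) :
    (tprod K v : ⨂[K] i, V i) ∈ segreTangent K V v := by
  simpa [Function.update_eq_self] using mem_tangent v 0 (v 0)

include e in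
lemma tangent_le_span (v : ∀ i, V i) (hv : ∀ i, v i ≠ 0) :
    ∃ g : Fin 5 → ⨂[K] i, V i,
      segreTangent K V v ≤ Submodule.span K (Set.range g) := by
  choose w hw using fun i => exists_compl e (hv i)
  refine ⟨fun j => Fin.cases (tprod K v) (fun i => tprod K (Function.update v i (w i))) j, ?_⟩
  rw [segreTangent]
  refine Submodule.span_le.mpr ?_
  rintro t ⟨i, z, rfl⟩
  obtain ⟨c, d, rfl⟩ := hw i z
  rw [MultilinearMap.map_update_add, MultilinearMap.map_update_smul, MultilinearMap.map_update_smul,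
    Function.update_eq_self]
  refine Submodule.add_mem _ (Submodule.smul_mem _ _ ?_) (Submodule.smul_mem _ _ ?_)
  · exact Submodule.subset_span ⟨0, rfl⟩
  · exact Submodule.subset_span ⟨i.succ, by simp⟩

include e in
lemma tangent_fd_finrank (v : ∀ i, V i) (hv : ∀ i, v i ≠ 0) :
    FiniteDimensional K (segreTangent K V v) ∧
      finrank K (segreTangent K V v) ≤ 5 := by
  obtain ⟨g, hle⟩ := tangent_le_span e v hv
  haveI : FiniteDimensional K (Submodule.span K (Set.range g)) :=
    FiniteDimensional.span_of_finite K (Set.finite_range g)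
  refine ⟨Submodule.finiteDimensional_of_le hle, ?_⟩
  refine (Submodule.finrank_mono hle).trans ?_
  simpa [Set.finrank] using finrank_range_le_card g

end Tensor

section Bound
variable {K : Type*} [Field K] {M : Type*} [AddCommGroup M] [Module K M]

lemma bound_sup (Ta Tb Tc : Submodule K M)
    [FiniteDimensional K Ta] [FiniteDimensional K Tb] [FiniteDimensional K Tc]
    (ha : finrank K Ta ≤ 5) (hb : finrank K Tb ≤ 5) (hc : finrank K Tc ≤ 5)
    (hex : ∃ t : M, t ≠ 0 ∧ t ∈ Tc ⊓ (Ta ⊔ Tb)) :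
    finrank K ↥(Ta ⊔ Tb ⊔ Tc) ≤ 14 := by
  haveI : FiniteDimensional K ↥(Ta ⊔ Tb) := Submodule.finiteDimensional_sup Ta Tb
  have h1 : finrank K ↥(Ta ⊔ Tb) ≤ 10 :=
    (Submodule.finrank_add_le_finrank_add_finrank Ta Tb).trans (by omega)
  have key := Submodule.finrank_sup_add_finrank_inf_eq (Ta ⊔ Tb) Tc
  haveI : FiniteDimensional K ↥((Ta ⊔ Tb) ⊓ Tc) :=
    Submodule.finiteDimensional_of_le inf_le_right
  have hpos : 0 < finrank K ↥((Ta ⊔ Tb) ⊓ Tc) := by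
    obtain ⟨t, ht0, htm⟩ := hex
    rw [Submodule.mem_inf] at htm
    rw [finrank_pos_iff]
    exact nontrivial_of_ne ⟨t, Submodule.mem_inf.mpr ⟨htm.2, htm.1⟩⟩ 0
      (by simp [Subtype.ext_iff, ht0])
  omega

lemma bound_iSup (T : Fin 3 → Submodule K M) [∀ m, FiniteDimensional K (T m)]
    (h5 : ∀ m, finrank K (T m) ≤ 5) (a b c : Fin 3) (hcov : ∀ m, m = a ∨ m = b ∨ m = c)
    (hex : ∃ t : M, t ≠ 0 ∧ t ∈ T c ⊓ (T a ⊔ T b)) :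
    finrank K ↥(⨆ m, T m) ≤ 14 := by
  have hle : (⨆ m, T m) ≤ T a ⊔ T b ⊔ T c := by
    refine iSup_le fun m => ?_
    rcases hcov m with h | h | h <;> subst h
    · exact le_sup_of_le_left le_sup_left
    · exact le_sup_of_le_left le_sup_right
    · exact le_sup_right
  haveI : FiniteDimensional K ↥(T a ⊔ T b) := Submodule.finiteDimensional_sup _ _
  haveI : FiniteDimensional K ↥(T a ⊔ T b ⊔ T c) := Submodule.finiteDimensional_sup _ _
  exact (Submodule.finrank_mono hle).trans (bound_sup _ _ _ (h5 a) (h5 b) (h5 c) hex)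

end Bound
section Identity
variable {K : Type*} [Field K] {V : Fin 4 → Type*} [∀ i, AddCommGroup (V i)]
  [∀ i, Module K (V i)] (e : ∀ i, Basis (Fin 2) K (V i))

open PiTensorProduct Function

set_option maxHeartbeats 1600000 in
include e in
lemma identityB (q1 q2 : ∀ i, V i) (A B : Fin 4 → K) :
    (2 : K) • (tprod K (fun j => B j • q1 j - A j • q2 j) : ⨂[K] i, V i)
      + ∑ i : Fin 4, A i •
          (tprod K (update (fun j => B j • q1 j - A j • q2 j) i (q2 i)) : ⨂[K] i, V i)
    = ((2 * ∏ j, B j) • (tprod K q1 : ⨂[K] i, V i)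
        + ∑ i : Fin 4, (-(A i * ∏ j, if j = i then 1 else B j)) •
            (tprod K (update q1 i (q2 i)) : ⨂[K] i, V i))
      + ((∑ i : Fin 4, (B i * ∏ j, if j = i then 1 else A j) •
            (tprod K (update q2 i (q1 i)) : ⨂[K] i, V i))
        + (-(2 * ∏ j, A j)) • (tprod K q2 : ⨂[K] i, V i)) := by
  rw [smul_tprod_eq_sum e, smul_tprod_eq_sum e, smul_tprod_eq_sum e,
    sum_smul_tprod_eq_sum e (fun i => A i) (fun i => update (fun j => B j • q1 j - A j • q2 j) i (q2 i)),
    sum_smul_tprod_eq_sum e (fun i => -(A i * ∏ j, if j = i then 1 else B j)) (fun i => update q1 i (q2 i)),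
    sum_smul_tprod_eq_sum e (fun i => B i * ∏ j, if j = i then 1 else A j) (fun i => update q2 i (q1 i))]
  simp only [← Finset.sum_add_distrib, ← add_smul]
  refine Finset.sum_congr rfl fun r _ => ?_
  congr 1
  simp only [coef, Fin.prod_univ_four, Fin.sum_univ_four]
  simp only [Function.update_self, Function.update_of_ne (by decide : (0:Fin 4) ≠ 1),
    Function.update_of_ne (by decide : (0:Fin 4) ≠ 2),
    Function.update_of_ne (by decide : (0:Fin 4) ≠ 3),
    Function.update_of_ne (by decide : (1:Fin 4) ≠ 0),
    Function.update_of_ne (by decide : (1:Fin 4) ≠ 2),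
    Function.update_of_ne (by decide : (1:Fin 4) ≠ 3),
    Function.update_of_ne (by decide : (2:Fin 4) ≠ 0),
    Function.update_of_ne (by decide : (2:Fin 4) ≠ 1),
    Function.update_of_ne (by decide : (2:Fin 4) ≠ 3),
    Function.update_of_ne (by decide : (3:Fin 4) ≠ 0),
    Function.update_of_ne (by decide : (3:Fin 4) ≠ 1),
    Function.update_of_ne (by decide : (3:Fin 4) ≠ 2)]
  simp only [map_sub, map_smul, Finsupp.coe_sub, Finsupp.coe_smul, Pi.sub_apply,
    Pi.smul_apply, smul_eq_mul, Fin.reduceEq, if_true, if_false, reduceIte]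
  ring

end Identity
section CaseB
variable {K : Type*} [Field K] {V : Fin 4 → Type*} [∀ i, AddCommGroup (V i)]
  [∀ i, Module K (V i)] (e : ∀ i, Basis (Fin 2) K (V i))

open PiTensorProduct Function

lemma dd_smul_right (i : Fin 4) (c : K) (u v : V i) :
    dd e i u (c • v) = c * dd e i u v := by
  simp [dd]; ring

lemma caseB_elt (q1 q2 q3 : ∀ i, V i) (h3 : ∀ i, q3 i ≠ 0)
    (i0 : Fin 4) (hA : dd e i0 (q3 i0) (q1 i0) ≠ 0) (hB : dd e i0 (q3 i0) (q2 i0) ≠ 0)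
    (hC : ∀ j, j ≠ i0 → dd e j (q1 j) (q2 j) ≠ 0) :
    ∃ t : ⨂[K] i, V i, t ≠ 0 ∧
      t ∈ segreTangent K V q3 ⊓ (segreTangent K V q1 ⊔ segreTangent K V q2) := by
  set A : Fin 4 → K := fun j => dd e j (q3 j) (q1 j) with hAdef
  set B : Fin 4 → K := fun j => dd e j (q3 j) (q2 j) with hBdef
  set C : Fin 4 → K := fun j => dd e j (q1 j) (q2 j) with hCdef
  have hsC : ∀ j, B j • q1 j - A j • q2 j = C j • q3 j := fun j =>
    (cramer_vec e j (q3 j) (q1 j) (q2 j)).symm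
  set s : ∀ i, V i := fun j => B j • q1 j - A j • q2 j with hsdef
  set t : ⨂[K] i, V i :=
    (2 : K) • (tprod K s : ⨂[K] i, V i)
      + ∑ i : Fin 4, A i • (tprod K (update s i (q2 i)) : ⨂[K] i, V i) with htdef
  refine ⟨t, ?_, ?_, ?_⟩
  · -- nonzero via the product functional
    choose εd hεd using fun j => exists_dual e (h3 j)
    set ε : ∀ j, V j →ₗ[K] K := Function.update (fun j => εd j) i0 (ddL e i0 (q3 i0)) with hεdef
    have hε0 : ε i0 (s i0) = 0 := by
      rw [hεdef, Function.update_self, hsdef]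
      simp only [hsC i0, map_smul, ddL_apply, dd_self, smul_eq_mul, mul_zero]
    have h2s : flin ε ((2 : K) • (tprod K s : ⨂[K] i, V i)) = 0 := by
      rw [map_smul, flin_tprod, Finset.prod_eq_zero (Finset.mem_univ i0) hε0, smul_zero]
    have hterm : ∀ i, i ≠ i0 →
        flin ε (A i • (tprod K (update s i (q2 i)) : ⨂[K] i, V i)) = 0 := by
      intro i hi
      have h0 : ε i0 ((update s i (q2 i)) i0) = 0 := by
        rw [Function.update_of_ne (Ne.symm hi)]; exact hε0
      rw [map_smul, flin_tprod, Finset.prod_eq_zero (Finset.mem_univ i0) h0, smul_zero]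
    have hval : flin ε t = A i0 * (ε i0 (q2 i0) * ∏ j ∈ Finset.univ.erase i0, ε j (s j)) := by
      rw [htdef, map_add, h2s, zero_add, map_sum,
        Finset.sum_eq_single_of_mem i0 (Finset.mem_univ i0) (fun i _ hi => hterm i hi),
        map_smul, flin_tprod, smul_eq_mul]
      congr 1
      rw [← Finset.mul_prod_erase Finset.univ _ (Finset.mem_univ i0), Function.update_self]
      exact congrArg _ (Finset.prod_congr rfl fun j hj =>
        congrArg _ (Function.update_of_ne (Finset.mem_erase.mp hj).1 _ _))
    have hne : flin ε t ≠ 0 := by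
      rw [hval]
      refine mul_ne_zero hA (mul_ne_zero ?_ ?_)
      · rw [hεdef, Function.update_self, ddL_apply]; exact hB
      · refine Finset.prod_ne_zero_iff.mpr fun j hj => ?_
        have hj0 : j ≠ i0 := (Finset.mem_erase.mp hj).1
        have hsj : s j = C j • q3 j := hsC j
        rw [hεdef, Function.update_of_ne hj0, hsj, map_smul, hεd j, smul_eq_mul, mul_one]
        exact hC j hj0
    exact fun h => hne (by rw [h, map_zero])
  · -- t ∈ T(q3)
    refine Submodule.add_mem _ (Submodule.smul_mem _ _ ?_) (Submodule.sum_mem _ fun i _ => ?_)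
    · have : (tprod K s : ⨂[K] i, V i) = (∏ j, C j) • tprod K q3 := by
        rw [show s = fun j => C j • q3 j from funext hsC]
        exact MultilinearMap.map_smul_univ _ _ _
      rw [this]
      exact Submodule.smul_mem _ _ (self_mem_tangent q3)
    · have hupd : update s i (q2 i) =
          fun j => (if j = i then (1 : K) else C j) • (update q3 i (q2 i)) j := by
        funext j
        by_cases h : j = i
        · subst h; simp
        · simp only [update_of_ne h, if_neg h, ← hsC j, hsdef]
      rw [hupd, MultilinearMap.map_smul_univ]
      exact Submodule.smul_mem _ _ (Submodule.smul_mem _ _ (mem_tangent q3 i (q2 i)))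
  · -- t ∈ T(q1) ⊔ T(q2)
    rw [htdef, hsdef, identityB e q1 q2 A B]
    refine Submodule.add_mem _ (Submodule.add_mem _ ?_ ?_) (Submodule.add_mem _ ?_ ?_)
    · exact Submodule.mem_sup_left (Submodule.smul_mem _ _ (self_mem_tangent q1))
    · exact Submodule.sum_mem _ fun i _ =>
        Submodule.mem_sup_left (Submodule.smul_mem _ _ (mem_tangent q1 i (q2 i)))
    · exact Submodule.sum_mem _ fun i _ =>
        Submodule.mem_sup_right (Submodule.smul_mem _ _ (mem_tangent q2 i (q1 i)))
    · exact Submodule.mem_sup_right (Submodule.smul_mem _ _ (self_mem_tangent q2))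

end CaseB
section CaseC
variable {K : Type*} [Field K] {V : Fin 4 → Type*} [∀ i, AddCommGroup (V i)]
  [∀ i, Module K (V i)] (e : ∀ i, Basis (Fin 2) K (V i))

open PiTensorProduct Function

set_option maxHeartbeats 3200000 in
include e in
lemma identityC (q1 q2 : ∀ i, V i) (A B : Fin 4 → K) (i0 : Fin 4) (α2 : K)
    (h2 : q2 i0 = α2 • q1 i0) :
    α2 • (tprod K (update (fun j => B j • q1 j - A j • q2 j) i0 (q1 i0)) : ⨂[K] i, V i)
    = ((α2 * ∏ j, if j = i0 then 1 else B j) • (tprod K q1 : ⨂[K] i, V i)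
        + ∑ i : Fin 4, (if i = i0 then 0 else -(α2 * A i * ∏ j, if j = i0 ∨ j = i then 1 else B j)) •
            (tprod K (update q1 i (q2 i)) : ⨂[K] i, V i))
      + ((∑ i : Fin 4, (if i = i0 then 0 else B i * ∏ j, if j = i0 ∨ j = i then 1 else A j) •
            (tprod K (update q2 i (q1 i)) : ⨂[K] i, V i))
        + (-(∏ j, if j = i0 then 1 else A j)) • (tprod K q2 : ⨂[K] i, V i)) := by
  have h4 : i0 = 0 ∨ i0 = 1 ∨ i0 = 2 ∨ i0 = 3 := by fin_cases i0 <;> decide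
  rcases h4 with rfl | rfl | rfl | rfl <;>
  · rw [smul_tprod_eq_sum e, smul_tprod_eq_sum e, smul_tprod_eq_sum e,
      sum_smul_tprod_eq_sum e _ (fun i => update q1 i (q2 i)),
      sum_smul_tprod_eq_sum e _ (fun i => update q2 i (q1 i))]
    simp only [← Finset.sum_add_distrib, ← add_smul]
    refine Finset.sum_congr rfl fun r _ => ?_
    congr 1
    simp only [coef, Fin.prod_univ_four, Fin.sum_univ_four]
    simp only [Function.update_self, Function.update_of_ne (by decide : (0:Fin 4) ≠ 1),
      Function.update_of_ne (by decide : (0:Fin 4) ≠ 2),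
      Function.update_of_ne (by decide : (0:Fin 4) ≠ 3),
      Function.update_of_ne (by decide : (1:Fin 4) ≠ 0),
      Function.update_of_ne (by decide : (1:Fin 4) ≠ 2),
      Function.update_of_ne (by decide : (1:Fin 4) ≠ 3),
      Function.update_of_ne (by decide : (2:Fin 4) ≠ 0),
      Function.update_of_ne (by decide : (2:Fin 4) ≠ 1),
      Function.update_of_ne (by decide : (2:Fin 4) ≠ 3),
      Function.update_of_ne (by decide : (3:Fin 4) ≠ 0),
      Function.update_of_ne (by decide : (3:Fin 4) ≠ 1),
      Function.update_of_ne (by decide : (3:Fin 4) ≠ 2)]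
    simp only [h2, map_sub, map_smul, Finsupp.coe_sub, Finsupp.coe_smul, Pi.sub_apply,
      Pi.smul_apply, smul_eq_mul, Fin.reduceEq, if_true, if_false, reduceIte,
      Fin.isValue, or_false, false_or, or_true, true_or]
    ring

lemma caseC_elt (q1 q2 q3 : ∀ i, V i) (h1 : ∀ i, q1 i ≠ 0) (h2 : ∀ i, q2 i ≠ 0)
    (h3 : ∀ i, q3 i ≠ 0) (i0 : Fin 4)
    (hp12 : dd e i0 (q1 i0) (q2 i0) = 0) (hp13 : dd e i0 (q1 i0) (q3 i0) = 0)
    (hC : ∀ j, j ≠ i0 → dd e j (q1 j) (q2 j) ≠ 0) :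
    ∃ t : ⨂[K] i, V i, t ≠ 0 ∧
      t ∈ segreTangent K V q3 ⊓ (segreTangent K V q1 ⊔ segreTangent K V q2) := by
  obtain ⟨α2, hα2⟩ := exists_smul e (h1 i0) hp12
  obtain ⟨α3, hα3⟩ := exists_smul e (h1 i0) hp13
  have hα2ne : α2 ≠ 0 := by
    intro h; apply h2 i0; rw [hα2, h, zero_smul]
  set A : Fin 4 → K := fun j => dd e j (q3 j) (q1 j) with hAdef
  set B : Fin 4 → K := fun j => dd e j (q3 j) (q2 j) with hBdef
  set C : Fin 4 → K := fun j => dd e j (q1 j) (q2 j) with hCdef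
  have hsC : ∀ j, B j • q1 j - A j • q2 j = C j • q3 j := fun j =>
    (cramer_vec e j (q3 j) (q1 j) (q2 j)).symm
  set s : ∀ i, V i := fun j => B j • q1 j - A j • q2 j with hsdef
  set t : ⨂[K] i, V i := tprod K (update s i0 (q3 i0)) with htdef
  have hfactor : t = (∏ j, if j = i0 then (1 : K) else C j) • tprod K q3 := by
    have hupd : update s i0 (q3 i0) = fun j => (if j = i0 then (1 : K) else C j) • q3 j := by
      funext j
      by_cases h : j = i0
      · subst h; simp
      · rw [update_of_ne h, if_neg h]; exact hsC j
    rw [htdef, hupd]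
    exact MultilinearMap.map_smul_univ _ _ _
  have hcoe : (∏ j, if j = i0 then (1 : K) else C j) ≠ 0 := by
    refine Finset.prod_ne_zero_iff.mpr fun j _ => ?_
    by_cases h : j = i0
    · rw [if_pos h]; exact one_ne_zero
    · rw [if_neg h]; exact hC j h
  refine ⟨t, ?_, ?_, ?_⟩
  · rw [hfactor]
    exact smul_ne_zero hcoe (tprod_ne_zero e h3)
  · rw [hfactor]
    exact Submodule.smul_mem _ _ (self_mem_tangent q3)
  · have ht2 : t = α3 • (α2⁻¹ • (α2 • (tprod K (update s i0 (q1 i0)) : ⨂[K] i, V i))) := by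
      rw [inv_smul_smul₀ hα2ne, htdef, hα3]
      exact MultilinearMap.map_update_smul _ _ _ _ _
    rw [ht2]
    refine Submodule.smul_mem _ _ (Submodule.smul_mem _ _ ?_)
    rw [hsdef, identityC e q1 q2 A B i0 α2 hα2]
    refine Submodule.add_mem _ (Submodule.add_mem _ ?_ ?_) (Submodule.add_mem _ ?_ ?_)
    · exact Submodule.mem_sup_left (Submodule.smul_mem _ _ (self_mem_tangent q1))
    · exact Submodule.sum_mem _ fun i _ =>
        Submodule.mem_sup_left (Submodule.smul_mem _ _ (mem_tangent q1 i (q2 i)))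
    · exact Submodule.sum_mem _ fun i _ =>
        Submodule.mem_sup_right (Submodule.smul_mem _ _ (mem_tangent q2 i (q1 i)))
    · exact Submodule.mem_sup_right (Submodule.smul_mem _ _ (self_mem_tangent q2))

end CaseC
section CaseA
variable {K : Type*} [Field K] {V : Fin 4 → Type*} [∀ i, AddCommGroup (V i)]
  [∀ i, Module K (V i)] (e : ∀ i, Basis (Fin 2) K (V i))

open PiTensorProduct Function

lemma fin4_aux : ∀ i j : Fin 4, i ≠ j → ∃ k l : Fin 4,
    k ≠ l ∧ k ≠ i ∧ k ≠ j ∧ l ≠ i ∧ l ≠ j ∧ ∀ m, m = i ∨ m = j ∨ m = k ∨ m = l := by decide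

lemma caseA_elt (u1 u2 : ∀ i, V i) (h1 : ∀ i, u1 i ≠ 0) (h2 : ∀ i, u2 i ≠ 0)
    (i j : Fin 4) (hij : i ≠ j)
    (hdi : dd e i (u1 i) (u2 i) = 0) (hdj : dd e j (u1 j) (u2 j) = 0) :
    ∃ t : ⨂[K] i, V i, t ≠ 0 ∧ t ∈ segreTangent K V u1 ⊓ segreTangent K V u2 := by
  obtain ⟨k, l, hkl, hki, hkj, hli, hlj, hcov⟩ := fin4_aux i j hij
  obtain ⟨γi, hγi⟩ := exists_smul e (h1 i) hdi
  obtain ⟨γj, hγj⟩ := exists_smul e (h1 j) hdj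
  have hγine : γi ≠ 0 := fun h => h2 i (by rw [hγi, h, zero_smul])
  have hγjne : γj ≠ 0 := fun h => h2 j (by rw [hγj, h, zero_smul])
  refine ⟨tprod K (update u1 k (u2 k)), ?_, mem_tangent u1 k (u2 k), ?_⟩
  · refine tprod_ne_zero e fun m => ?_
    by_cases h : m = k
    · subst h; rw [update_self]; exact h2 m
    · rw [update_of_ne h]; exact h1 m
  · have hfun : update u1 k (u2 k) = fun m =>
        (if m = i then γi⁻¹ else if m = j then γj⁻¹ else 1) • (update u2 l (u1 l)) m := by
      funext m
      rcases hcov m with rfl | rfl | rfl | rfl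
      · rw [update_of_ne (Ne.symm hki), update_of_ne (Ne.symm hli), if_pos rfl, hγi,
          inv_smul_smul₀ hγine]
      · rw [update_of_ne (Ne.symm hkj), update_of_ne (Ne.symm hlj), if_neg (Ne.symm hij),
          if_pos rfl, hγj, inv_smul_smul₀ hγjne]
      · rw [update_self, update_of_ne hkl, if_neg hki, if_neg hkj, one_smul]
      · rw [update_of_ne (Ne.symm hkl), update_self, if_neg hli, if_neg hlj, one_smul]
    rw [hfun, MultilinearMap.map_smul_univ]
    exact Submodule.smul_mem _ _ (mem_tangent u2 l (u1 l))

end CaseA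

section Main

theorem stmt16' {K : Type*} [Field K]
    (V : Fin 4 → Type*) [∀ i, AddCommGroup (V i)] [∀ i, Module K (V i)]
    [∀ i, FiniteDimensional K (V i)] (hdim : ∀ i, finrank K (V i) = 2)
    (p : Fin 3 → ∀ i, V i) (hp : ∀ m i, p m i ≠ 0) :
    finrank K ↥(⨆ m, segreTangent K V (p m)) ≤ 14 := by
  classical
  set e : ∀ i, Basis (Fin 2) K (V i) :=
    fun i => Module.finBasisOfFinrankEq K (V i) (hdim i) with hedef
  set T : Fin 3 → Submodule K (⨂[K] i, V i) := fun m => segreTangent K V (p m) with hTdef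
  haveI hfd : ∀ m, FiniteDimensional K (T m) :=
    fun m => (tangent_fd_finrank e (p m) (hp m)).1
  have hT5 : ∀ m, finrank K (T m) ≤ 5 := fun m => (tangent_fd_finrank e (p m) (hp m)).2
  by_cases hA12 : ∃ i j : Fin 4, i ≠ j ∧
      dd e i (p 0 i) (p 1 i) = 0 ∧ dd e j (p 0 j) (p 1 j) = 0
  · obtain ⟨i, j, hij, hi, hj⟩ := hA12
    obtain ⟨t, ht0, htm⟩ := caseA_elt e (p 0) (p 1) (hp 0) (hp 1) i j hij hi hj
    rw [Submodule.mem_inf] at htm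
    exact bound_iSup T hT5 1 2 0 (by decide)
      ⟨t, ht0, Submodule.mem_inf.mpr ⟨htm.1, Submodule.mem_sup_left htm.2⟩⟩
  by_cases hA13 : ∃ i j : Fin 4, i ≠ j ∧
      dd e i (p 0 i) (p 2 i) = 0 ∧ dd e j (p 0 j) (p 2 j) = 0
  · obtain ⟨i, j, hij, hi, hj⟩ := hA13
    obtain ⟨t, ht0, htm⟩ := caseA_elt e (p 0) (p 2) (hp 0) (hp 2) i j hij hi hj
    rw [Submodule.mem_inf] at htm
    exact bound_iSup T hT5 2 1 0 (by decide)
      ⟨t, ht0, Submodule.mem_inf.mpr ⟨htm.1, Submodule.mem_sup_left htm.2⟩⟩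
  by_cases hA23 : ∃ i j : Fin 4, i ≠ j ∧
      dd e i (p 1 i) (p 2 i) = 0 ∧ dd e j (p 1 j) (p 2 j) = 0
  · obtain ⟨i, j, hij, hi, hj⟩ := hA23
    obtain ⟨t, ht0, htm⟩ := caseA_elt e (p 1) (p 2) (hp 1) (hp 2) i j hij hi hj
    rw [Submodule.mem_inf] at htm
    exact bound_iSup T hT5 2 0 1 (by decide)
      ⟨t, ht0, Submodule.mem_inf.mpr ⟨htm.1, Submodule.mem_sup_left htm.2⟩⟩
  by_cases hc3 : ∃ i0 : Fin 4, dd e i0 (p 0 i0) (p 1 i0) = 0 ∧ dd e i0 (p 0 i0) (p 2 i0) = 0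
  · obtain ⟨i0, hp12, hp13⟩ := hc3
    have hC : ∀ j, j ≠ i0 → dd e j (p 0 j) (p 1 j) ≠ 0 := by
      intro j hj h
      exact hA12 ⟨j, i0, hj, h, hp12⟩
    obtain ⟨t, ht0, htm⟩ :=
      caseC_elt e (p 0) (p 1) (p 2) (hp 0) (hp 1) (hp 2) i0 hp12 hp13 hC
    exact bound_iSup T hT5 0 1 2 (by decide) ⟨t, ht0, htm⟩
  -- case B
  have hfind : ∃ i0 : Fin 4, dd e i0 (p 2 i0) (p 0 i0) ≠ 0 ∧ dd e i0 (p 2 i0) (p 1 i0) ≠ 0 ∧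
      ∀ j, j ≠ i0 → dd e j (p 0 j) (p 1 j) ≠ 0 := by
    by_cases hz : ∃ j0 : Fin 4, dd e j0 (p 0 j0) (p 1 j0) = 0
    · obtain ⟨j0, hj0⟩ := hz
      refine ⟨j0, ?_, ?_, ?_⟩
      · intro h
        exact hc3 ⟨j0, hj0, dd_comm_zero e h⟩
      · intro h
        obtain ⟨a, haeq⟩ := exists_smul e (hp 0 j0) hj0
        obtain ⟨b, hbeq⟩ := exists_smul e (hp 2 j0) h
        have hane : a ≠ 0 := fun h' => hp 1 j0 (by rw [haeq, h', zero_smul])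
        have h02 : p 0 j0 = a⁻¹ • (b • p 2 j0) := by
          rw [← hbeq, haeq, inv_smul_smul₀ hane]
        refine hc3 ⟨j0, hj0, ?_⟩
        rw [h02, dd_smul_left, dd_smul_left, dd_self, mul_zero, mul_zero]
      · intro j hj h
        exact hA12 ⟨j, j0, hj, h, hj0⟩
    · push_neg at hz
      by_cases ok0 : dd e 0 (p 2 0) (p 0 0) ≠ 0 ∧ dd e 0 (p 2 0) (p 1 0) ≠ 0
      · exact ⟨0, ok0.1, ok0.2, fun j _ => hz j⟩
      by_cases ok1 : dd e 1 (p 2 1) (p 0 1) ≠ 0 ∧ dd e 1 (p 2 1) (p 1 1) ≠ 0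
      · exact ⟨1, ok1.1, ok1.2, fun j _ => hz j⟩
      by_cases ok2 : dd e 2 (p 2 2) (p 0 2) ≠ 0 ∧ dd e 2 (p 2 2) (p 1 2) ≠ 0
      · exact ⟨2, ok2.1, ok2.2, fun j _ => hz j⟩
      exfalso
      rw [not_and_or, not_ne_iff, not_ne_iff] at ok0 ok1 ok2
      rcases ok0 with g0 | h0 <;> rcases ok1 with g1 | h1 <;> rcases ok2 with g2 | h2
      · exact hA13 ⟨0, 1, by decide, dd_comm_zero e g0, dd_comm_zero e g1⟩
      · exact hA13 ⟨0, 1, by decide, dd_comm_zero e g0, dd_comm_zero e g1⟩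
      · exact hA13 ⟨0, 2, by decide, dd_comm_zero e g0, dd_comm_zero e g2⟩
      · exact hA23 ⟨1, 2, by decide, dd_comm_zero e h1, dd_comm_zero e h2⟩
      · exact hA13 ⟨1, 2, by decide, dd_comm_zero e g1, dd_comm_zero e g2⟩
      · exact hA23 ⟨0, 2, by decide, dd_comm_zero e h0, dd_comm_zero e h2⟩
      · exact hA23 ⟨0, 1, by decide, dd_comm_zero e h0, dd_comm_zero e h1⟩
      · exact hA23 ⟨0, 1, by decide, dd_comm_zero e h0, dd_comm_zero e h1⟩
  obtain ⟨i0, hG, hH, hc⟩ := hfind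
  obtain ⟨t, ht0, htm⟩ := caseB_elt e (p 0) (p 1) (p 2) (hp 2) i0 hG hH hc
  exact bound_iSup T hT5 0 1 2 (by decide) ⟨t, ht0, htm⟩

end Main

/-- for `V₁, V₂, V₃, V₄` each two-dimensional over an algebraically
closed field of characteristic `0`, and ANY three nonzero simple tensors
`p₁, p₂, p₃` in `V₁ ⊗ V₂ ⊗ V₃ ⊗ V₄`, the sum of the three affine tangent spaces to
the Segre cone at `p₁, p₂, p₃` has dimension at most `14` (defectivity of
`σ₃` of the Segre of `(P^1)^4`). -/
theorem stmt16 {K : Type*} [Field K] [IsAlgClosed K] [CharZero K]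
    (V : Fin 4 → Type*) [∀ i, AddCommGroup (V i)] [∀ i, Module K (V i)]
    [∀ i, FiniteDimensional K (V i)] (hdim : ∀ i, finrank K (V i) = 2)
    (p : Fin 3 → ∀ i, V i) (hp : ∀ m i, p m i ≠ 0) :
    finrank K ↥(⨆ m, segreTangent K V (p m)) ≤ 14 :=
  stmt16' V hdim p hp
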